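/- Let A and B be unital algebras, H a Hopf algebra with a symmetric partial action on A, and (φ, π) a covariant pair with values in B. Then there exists a unique algebra morphism Φ : A#H → B such that φ = Φ∘φ₀ and π = Φ∘π₀, where φ₀(a) = a#1_H and π₀(h) = 1_A#h. Explicitly Φ(a#h) = φ(a)π(h). -/

import Mathlib

open TensorProduct BigOperators HopfAlgebra

variable (k : Type) [CommRing k]

/-- A partial representation of a Hopf algebra `H` on an algebra `B` (axioms (PR1)-(PR5)),
stated using arbitrary finite Sweedler decompositions of the comultiplication. -/
def IsPartialRep {H : Type} [Ring H] [HopfAlgebra k H]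
    {B : Type} [Ring B] [Algebra k B] (π : H →ₗ[k] B) : Prop :=
  -- (PR1)
  π 1 = 1 ∧
  -- (PR2) : π(h)π(x₍₁₎)π(S(x₍₂₎)) = π(h x₍₁₎)π(S(x₍₂₎))
  (∀ (h x : H) (n : ℕ) (x1 x2 : Fin n → H),
    Coalgebra.comul (R := k) x = ∑ i, x1 i ⊗ₜ[k] x2 i →
    π h * ∑ i, π (x1 i) * π (antipode (R := k) (x2 i)) =
      ∑ i, π (h * x1 i) * π (antipode (R := k) (x2 i))) ∧
  -- (PR3) : π(h₍₁₎)π(S(h₍₂₎))π(x) = π(h₍₁₎)π(S(h₍₂₎) x)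
  (∀ (h x : H) (n : ℕ) (h1 h2 : Fin n → H),
    Coalgebra.comul (R := k) h = ∑ i, h1 i ⊗ₜ[k] h2 i →
    (∑ i, π (h1 i) * π (antipode (R := k) (h2 i))) * π x =
      ∑ i, π (h1 i) * π (antipode (R := k) (h2 i) * x)) ∧
  -- (PR4) : π(h)π(S(x₍₁₎))π(x₍₂₎) = π(h S(x₍₁₎))π(x₍₂₎)
  (∀ (h x : H) (n : ℕ) (x1 x2 : Fin n → H),
    Coalgebra.comul (R := k) x = ∑ i, x1 i ⊗ₜ[k] x2 i →
    π h * ∑ i, π (antipode (R := k) (x1 i)) * π (x2 i) =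
      ∑ i, π (h * antipode (R := k) (x1 i)) * π (x2 i)) ∧
  -- (PR5) : π(S(h₍₁₎))π(h₍₂₎)π(x) = π(S(h₍₁₎))π(h₍₂₎ x)
  (∀ (h x : H) (n : ℕ) (h1 h2 : Fin n → H),
    Coalgebra.comul (R := k) h = ∑ i, h1 i ⊗ₜ[k] h2 i →
    (∑ i, π (antipode (R := k) (h1 i)) * π (h2 i)) * π x =
      ∑ i, π (antipode (R := k) (h1 i)) * π (h2 i * x))

variable {k}
variable {H : Type} [Ring H] [HopfAlgebra k H]
variable {A : Type} [Ring A] [Algebra k A]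

/-- The map `H ⊗ A → A ⊗ H`, `h ⊗ b ↦ ∑ (h₍₁₎·b) ⊗ h₍₂₎`, for an action `act`. -/
noncomputable def smashHalf (act : H →ₗ[k] Module.End k A) : H ⊗[k] A →ₗ[k] A ⊗[k] H :=
  (TensorProduct.map (TensorProduct.lift (act : H →ₗ[k] A →ₗ[k] A)) LinearMap.id) ∘ₗ
    (TensorProduct.assoc k H A H).symm.toLinearMap ∘ₗ
    (TensorProduct.map LinearMap.id (TensorProduct.comm k H A).toLinearMap) ∘ₗ
    (TensorProduct.assoc k H H A).toLinearMap ∘ₗ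
    (TensorProduct.map (Coalgebra.comul (R := k)) LinearMap.id)

/-- The smash multiplication on `A ⊗ H`: `(a ⊗ h)(b ⊗ x) = ∑ a(h₍₁₎·b) ⊗ h₍₂₎x`. -/
noncomputable def smashMul (act : H →ₗ[k] Module.End k A) :
    (A ⊗[k] H) →ₗ[k] (A ⊗[k] H) →ₗ[k] (A ⊗[k] H) :=
  TensorProduct.curry <|
    (TensorProduct.map (LinearMap.mul' k A) LinearMap.id) ∘ₗ
    (TensorProduct.assoc k A A H).symm.toLinearMap ∘ₗ
    (TensorProduct.map LinearMap.id
      ((TensorProduct.map LinearMap.id (LinearMap.mul' k H)) ∘ₗ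
        (TensorProduct.assoc k A H H).toLinearMap ∘ₗ
        (TensorProduct.map (smashHalf act) LinearMap.id) ∘ₗ
        (TensorProduct.assoc k H A H).symm.toLinearMap)) ∘ₗ
    (TensorProduct.assoc k A H (A ⊗[k] H)).toLinearMap

/-- The element `a # h := (a ⊗ h)(1_A ⊗ 1_H)` of the partial smash product. -/
noncomputable def sharp (act : H →ₗ[k] Module.End k A) (a : A) (h : H) : A ⊗[k] H :=
  smashMul act (a ⊗ₜ[k] h) ((1 : A) ⊗ₜ[k] (1 : H))

/-!
The morphism is forced to be `Φ(a#h) = φ(a)π(h)`, since `a#h = (a#1)(1#h)` and the elements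
`a#h` span `A#H`. For existence, the linear map `a ⊗ h ↦ φ(a)π(h)` on all of `A ⊗ H` is already
multiplicative for the smash multiplication. This comes down to
`φ(h₁·c) π(h₂x) = π(h) φ(c) π(x)`: expand `φ(h₁·c)` by (CP1), move the
factor `π(S h₂)π(h₃)` past `π(x)` by (PR5) and past `φ(c)` by (CP2), and collapse
`π(h₁)π(S h₂)π(h₃) = π(h)` using (PR3), the antipode and the counit.
-/

theorem exists_comul_eq_sum_fin (h : H) : ∃ (n : ℕ) (h1 h2 : Fin n → H),
    Coalgebra.comul (R := k) h = ∑ i, h1 i ⊗ₜ[k] h2 i := by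
  obtain ⟨S, hS⟩ := TensorProduct.exists_finset (Coalgebra.comul (R := k) h)
  refine ⟨S.card, fun i => (S.equivFin.symm i).1.1, fun i => (S.equivFin.symm i).1.2, ?_⟩
  rw [hS, ← Finset.sum_coe_sort S (fun p => p.1 ⊗ₜ[k] p.2),
    ← Equiv.sum_comp S.equivFin.symm (fun p => (p : H × H).1 ⊗ₜ[k] (p : H × H).2)]

theorem sum_counit_smul_of_comul_eq {h : H} {n : ℕ} {h1 h2 : Fin n → H}
    (hc : Coalgebra.comul (R := k) h = ∑ i, h1 i ⊗ₜ[k] h2 i) :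
    ∑ i, Coalgebra.counit (R := k) (h2 i) • h1 i = h := by
  simpa [hc, map_sum] using
    congrArg (TensorProduct.rid k H) (Coalgebra.lTensor_counit_comul (R := k) h)

theorem sum_sum_mul_of_coassoc {M : Type} [Semiring M] [Algebra k M]
    (f : H →ₗ[k] M) (g : H →ₗ[k] H →ₗ[k] M) {h : H} {n : ℕ} {h1 h2 : Fin n → H}
    (hc : Coalgebra.comul (R := k) h = ∑ i, h1 i ⊗ₜ[k] h2 i)
    {m m' : Fin n → ℕ} {u v : ∀ i, Fin (m i) → H} {p q : ∀ i, Fin (m' i) → H}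
    (hu : ∀ i, Coalgebra.comul (R := k) (h1 i) = ∑ l, u i l ⊗ₜ[k] v i l)
    (hp : ∀ i, Coalgebra.comul (R := k) (h2 i) = ∑ l, p i l ⊗ₜ[k] q i l) :
    ∑ i, ∑ l, f (u i l) * g (v i l) (h2 i) = ∑ i, ∑ l, f (h1 i) * g (p i l) (q i l) := by
  simpa [hc, hu, hp, map_sum, TensorProduct.sum_tmul, TensorProduct.tmul_sum] using
    congrArg (LinearMap.mul' k M ∘ₗ TensorProduct.map f (TensorProduct.lift g))
      (Coalgebra.coassoc_apply (R := k) h)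

section SmashProduct

variable (act : H →ₗ[k] Module.End k A)

theorem smashHalf_tmul (c : A) {h : H} {n : ℕ} {h1 h2 : Fin n → H}
    (hc : Coalgebra.comul (R := k) h = ∑ i, h1 i ⊗ₜ[k] h2 i) :
    smashHalf act (h ⊗ₜ[k] c) = ∑ i, act (h1 i) c ⊗ₜ[k] h2 i := by
  simp only [smashHalf, LinearMap.coe_comp, LinearEquiv.coe_coe, Function.comp_apply,
    TensorProduct.map_tmul, LinearMap.id_coe, id_eq, hc, TensorProduct.sum_tmul, map_sum,
    TensorProduct.assoc_tmul, TensorProduct.comm_tmul, TensorProduct.assoc_symm_tmul,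
    TensorProduct.lift.tmul]

theorem smashMul_tmul (a c : A) (x : H) {h : H} {n : ℕ} {h1 h2 : Fin n → H}
    (hc : Coalgebra.comul (R := k) h = ∑ i, h1 i ⊗ₜ[k] h2 i) :
    smashMul act (a ⊗ₜ[k] h) (c ⊗ₜ[k] x) = ∑ i, (a * act (h1 i) c) ⊗ₜ[k] (h2 i * x) := by
  simp only [smashMul, TensorProduct.curry_apply, LinearMap.coe_comp, LinearEquiv.coe_coe,
    Function.comp_apply, TensorProduct.assoc_tmul, TensorProduct.map_tmul, LinearMap.id_coe,
    id_eq, TensorProduct.assoc_symm_tmul, smashHalf_tmul act c hc, TensorProduct.sum_tmul,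
    TensorProduct.tmul_sum, map_sum, LinearMap.mul'_apply]

theorem smashMul_one_tmul (hPA1 : ∀ a : A, act 1 a = a) (a c : A) (x : H) :
    smashMul act (a ⊗ₜ[k] 1) (c ⊗ₜ[k] x) = (a * c) ⊗ₜ[k] x := by
  have hc : Coalgebra.comul (R := k) (1 : H) = ∑ _i : Fin 1, (1 : H) ⊗ₜ[k] (1 : H) := by
    simp [Algebra.TensorProduct.one_def]
  simp [smashMul_tmul act a c x hc, hPA1]

theorem sharp_eq_sum (a : A) {h : H} {n : ℕ} {h1 h2 : Fin n → H}
    (hc : Coalgebra.comul (R := k) h = ∑ i, h1 i ⊗ₜ[k] h2 i) :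
    sharp act a h = ∑ i, (a * act (h1 i) 1) ⊗ₜ[k] h2 i := by
  simp only [sharp, smashMul_tmul act a 1 1 hc, mul_one]

theorem smashMul_sharp_one_sharp (hPA1 : ∀ a : A, act 1 a = a) (a : A) (h : H) :
    smashMul act (sharp act a 1) (sharp act 1 h) = sharp act a h := by
  obtain ⟨n, h1, h2, hc⟩ := exists_comul_eq_sum_fin (k := k) h
  rw [sharp, smashMul_one_tmul act hPA1, mul_one, sharp_eq_sum act 1 hc, sharp_eq_sum act a hc,
    map_sum]
  simp only [smashMul_one_tmul act hPA1, one_mul]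

noncomputable abbrev partialSmash : Submodule k (A ⊗[k] H) :=
  LinearMap.range ((smashMul act).flip ((1 : A) ⊗ₜ[k] (1 : H)))

theorem sharp_mem_partialSmash (a : A) (h : H) : sharp act a h ∈ partialSmash act :=
  ⟨a ⊗ₜ[k] h, rfl⟩

theorem partialSmash.linearMap_ext {M : Type} [AddCommMonoid M] [Module k M]
    {Φ Ψ : partialSmash act →ₗ[k] M}
    (hΦΨ : ∀ a h, Φ ⟨sharp act a h, sharp_mem_partialSmash act a h⟩ =
      Ψ ⟨sharp act a h, sharp_mem_partialSmash act a h⟩) : Φ = Ψ :=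
  (LinearMap.cancel_right (LinearMap.surjective_rangeRestrict _)).1 (TensorProduct.ext' hΦΨ)

end SmashProduct

variable {B : Type} [Ring B] [Algebra k B]

/-- In Sweedler notation, `π(h₁) π(S h₂) π(h₃) = π(h)`. -/
theorem IsPartialRep.sum_mul_sum_antipode_mul {π : H →ₗ[k] B} (hπ : IsPartialRep k π)
    {h : H} {n : ℕ} {h1 h2 : Fin n → H} (hc : Coalgebra.comul (R := k) h = ∑ i, h1 i ⊗ₜ[k] h2 i)
    {m : Fin n → ℕ} {p q : ∀ i, Fin (m i) → H}
    (hp : ∀ i, Coalgebra.comul (R := k) (h2 i) = ∑ l, p i l ⊗ₜ[k] q i l) :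
    ∑ i, π (h1 i) * ∑ l, π (antipode k (p i l)) * π (q i l) = π h := by
  obtain ⟨hπ1, -, hπ3, -, -⟩ := hπ
  choose m' u v hu using fun i => exists_comul_eq_sum_fin (k := k) (h1 i)
  have hS : ∀ i, ∑ l, antipode k (p i l) * q i l
      = algebraMap k H (Coalgebra.counit (R := k) (h2 i)) := fun i =>
    HopfAlgebra.sum_antipode_mul_eq_algebraMap_counit ⟨Finset.univ, p i, q i, (hp i).symm⟩
  calc ∑ i, π (h1 i) * ∑ l, π (antipode k (p i l)) * π (q i l)
      = ∑ i, ∑ l, π (u i l) * (π (antipode k (v i l)) * π (h2 i)) := by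
        simp only [Finset.mul_sum]
        exact (sum_sum_mul_of_coassoc π ((LinearMap.mul k B ∘ₗ π ∘ₗ antipode k).compl₂ π)
          hc hu hp).symm
    _ = ∑ i, ∑ l, π (u i l) * π (antipode k (v i l) * h2 i) := by
        simp only [← hπ3 _ _ _ _ _ (hu _), Finset.sum_mul, mul_assoc]
    _ = ∑ i, ∑ l, π (h1 i) * π (antipode k (p i l) * q i l) :=
        sum_sum_mul_of_coassoc π ((LinearMap.mul k H ∘ₗ antipode k).compr₂ π) hc hu hp
    _ = π h := by
        simp only [← Finset.mul_sum, ← map_sum, hS, Algebra.algebraMap_eq_smul_one, map_smul, hπ1,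
          mul_smul_comm, mul_one]
        simp only [← map_smul, ← map_sum, sum_counit_smul_of_comul_eq hc]

variable (act : H →ₗ[k] Module.End k A) (φ : A →ₐ[k] B) (π : H →ₗ[k] B)

def IsCovariantPair : Prop :=
  IsPartialRep k π ∧
  (∀ (h : H) (a : A) (n : ℕ) (h1 h2 : Fin n → H),
    Coalgebra.comul (R := k) h = ∑ i, h1 i ⊗ₜ[k] h2 i →
    φ (act h a) = ∑ i, π (h1 i) * φ a * π (antipode (R := k) (h2 i))) ∧
  (∀ (h : H) (a : A) (n : ℕ) (h1 h2 : Fin n → H),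
    Coalgebra.comul (R := k) h = ∑ i, h1 i ⊗ₜ[k] h2 i →
    φ a * ∑ i, π (antipode (R := k) (h1 i)) * π (h2 i) =
      (∑ i, π (antipode (R := k) (h1 i)) * π (h2 i)) * φ a)

variable {act φ π}

theorem IsCovariantPair.sum_apply_act_mul_apply_mul (hcov : IsCovariantPair act φ π)
    (c : A) (x : H) {h : H} {n : ℕ} {h1 h2 : Fin n → H}
    (hc : Coalgebra.comul (R := k) h = ∑ i, h1 i ⊗ₜ[k] h2 i) :
    ∑ i, φ (act (h1 i) c) * π (h2 i * x) = π h * φ c * π x := by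
  obtain ⟨hπ, hCP1, hCP2⟩ := hcov
  have hπ5 := hπ.2.2.2.2
  choose m u v hu using fun i => exists_comul_eq_sum_fin (k := k) (h1 i)
  choose m' p q hp using fun i => exists_comul_eq_sum_fin (k := k) (h2 i)
  calc ∑ i, φ (act (h1 i) c) * π (h2 i * x)
      = ∑ i, ∑ l, (π (u i l) * φ c) * (π (antipode k (v i l)) * π (h2 i * x)) := by
        simp only [hCP1 _ c _ _ _ (hu _), Finset.sum_mul, mul_assoc]
    _ = ∑ i, ∑ l, (π (h1 i) * φ c) * (π (antipode k (p i l)) * π (q i l * x)) :=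
        sum_sum_mul_of_coassoc (LinearMap.mulRight k (φ c) ∘ₗ π)
          ((LinearMap.mul k B ∘ₗ π ∘ₗ antipode k).compl₂ (π ∘ₗ LinearMap.mulRight k x)) hc hu hp
    _ = ∑ i, π (h1 i) * (φ c * ((∑ l, π (antipode k (p i l)) * π (q i l)) * π x)) := by
        simp only [hπ5 _ x _ _ _ (hp _), Finset.mul_sum, mul_assoc]
    _ = ∑ i, π (h1 i) * (∑ l, π (antipode k (p i l)) * π (q i l)) * φ c * π x := by
        simp only [← mul_assoc, hCP2 _ c _ _ _ (hp _)]
    _ = π h * φ c * π x := by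
        rw [← hπ.sum_mul_sum_antipode_mul hc hp]
        simp only [Finset.sum_mul]

variable (φ π) in
noncomputable def smashLift : A ⊗[k] H →ₗ[k] B :=
  TensorProduct.lift ((LinearMap.mul k B).compl₂ π ∘ₗ φ.toLinearMap)

theorem smashLift_tmul (a : A) (h : H) : smashLift φ π (a ⊗ₜ[k] h) = φ a * π h := rfl

theorem IsCovariantPair.smashLift_smashMul (hcov : IsCovariantPair act φ π) (y z : A ⊗[k] H) :
    smashLift φ π (smashMul act y z) = smashLift φ π y * smashLift φ π z := by
  induction y using TensorProduct.induction_on with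
  | zero => simp
  | add y₁ y₂ ih₁ ih₂ => simp only [map_add, LinearMap.add_apply, ih₁, ih₂, add_mul]
  | tmul a h =>
    induction z using TensorProduct.induction_on with
    | zero => simp
    | add z₁ z₂ ih₁ ih₂ => simp only [map_add, ih₁, ih₂, mul_add]
    | tmul c x =>
      obtain ⟨n, h1, h2, hc⟩ := exists_comul_eq_sum_fin (k := k) h
      simp only [smashMul_tmul act a c x hc, map_sum, smashLift_tmul, map_mul, mul_assoc,
        ← Finset.mul_sum, hcov.sum_apply_act_mul_apply_mul c x hc]

theorem IsCovariantPair.smashLift_sharp (hcov : IsCovariantPair act φ π) (a : A) (h : H) :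
    smashLift φ π (sharp act a h) = φ a * π h := by
  have hπ1 : π 1 = 1 := hcov.1.1
  rw [sharp, hcov.smashLift_smashMul, smashLift_tmul, smashLift_tmul, map_one, hπ1, mul_one,
    mul_one]

variable (act φ π) in
def IsSmashLift (Φ : partialSmash act →ₗ[k] B) : Prop :=
  (∀ (x y : A ⊗[k] H) (hx : x ∈ partialSmash act) (hy : y ∈ partialSmash act)
      (hxy : smashMul act x y ∈ partialSmash act),
    Φ ⟨smashMul act x y, hxy⟩ = Φ ⟨x, hx⟩ * Φ ⟨y, hy⟩) ∧
  Φ ⟨sharp act 1 1, sharp_mem_partialSmash act 1 1⟩ = 1 ∧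
  (∀ a : A, Φ ⟨sharp act a 1, sharp_mem_partialSmash act a 1⟩ = φ a) ∧
  (∀ h : H, Φ ⟨sharp act 1 h, sharp_mem_partialSmash act 1 h⟩ = π h)

theorem IsSmashLift.apply_sharp {Φ : partialSmash act →ₗ[k] B} (hΦ : IsSmashLift act φ π Φ)
    (hPA1 : ∀ a : A, act 1 a = a) (a : A) (h : H) :
    Φ ⟨sharp act a h, sharp_mem_partialSmash act a h⟩ = φ a * π h := by
  obtain ⟨hmul, -, hφ, hπ⟩ := hΦ
  have hmem : smashMul act (sharp act a 1) (sharp act 1 h) ∈ partialSmash act := by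
    rw [smashMul_sharp_one_sharp act hPA1]
    exact sharp_mem_partialSmash act a h
  have := hmul _ _ (sharp_mem_partialSmash act a 1) (sharp_mem_partialSmash act 1 h) hmem
  simpa only [smashMul_sharp_one_sharp act hPA1, hφ, hπ] using this

theorem IsCovariantPair.isSmashLift (hcov : IsCovariantPair act φ π) :
    IsSmashLift act φ π (smashLift φ π ∘ₗ (partialSmash act).subtype) := by
  have hπ1 : π 1 = 1 := hcov.1.1
  refine ⟨fun x y _ _ _ => hcov.smashLift_smashMul x y, ?_, fun a => ?_, fun h => ?_⟩ <;>
    simp only [LinearMap.comp_apply, Submodule.subtype_apply, hcov.smashLift_sharp, map_one, hπ1,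
      mul_one, one_mul]

theorem smash_universal_property_general {B : Type} [Ring B] [Algebra k B]
    (act : H →ₗ[k] Module.End k A)
    -- symmetric partial action (PA1)-(PA4)
    (hPA1 : ∀ a : A, act 1 a = a)
    -- the covariant pair
    (φ : A →ₐ[k] B) (π : H →ₗ[k] B) (hπ : IsPartialRep k π)
    -- (CP1)
    (hCP1 : ∀ (h : H) (a : A) (n : ℕ) (h1 h2 : Fin n → H),
      Coalgebra.comul (R := k) h = ∑ i, h1 i ⊗ₜ[k] h2 i →
      φ (act h a) = ∑ i, π (h1 i) * φ a * π (antipode (R := k) (h2 i)))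
    -- (CP2)
    (hCP2 : ∀ (h : H) (a : A) (n : ℕ) (h1 h2 : Fin n → H),
      Coalgebra.comul (R := k) h = ∑ i, h1 i ⊗ₜ[k] h2 i →
      φ a * ∑ i, π (antipode (R := k) (h1 i)) * π (h2 i) =
        (∑ i, π (antipode (R := k) (h1 i)) * π (h2 i)) * φ a) :
    (∃! Φ : ↥(LinearMap.range ((smashMul act).flip ((1 : A) ⊗ₜ[k] (1 : H)))) →ₗ[k] B,
      (∀ (x y : A ⊗[k] H)
          (hx : x ∈ LinearMap.range ((smashMul act).flip ((1 : A) ⊗ₜ[k] (1 : H))))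
          (hy : y ∈ LinearMap.range ((smashMul act).flip ((1 : A) ⊗ₜ[k] (1 : H))))
          (hxy : smashMul act x y ∈
            LinearMap.range ((smashMul act).flip ((1 : A) ⊗ₜ[k] (1 : H)))),
        Φ ⟨smashMul act x y, hxy⟩ = Φ ⟨x, hx⟩ * Φ ⟨y, hy⟩) ∧
      Φ ⟨sharp act 1 1, LinearMap.mem_range.mpr ⟨(1 : A) ⊗ₜ[k] (1 : H), rfl⟩⟩ = 1 ∧
      (∀ a : A, Φ ⟨sharp act a 1, LinearMap.mem_range.mpr ⟨a ⊗ₜ[k] (1 : H), rfl⟩⟩ = φ a) ∧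
      (∀ h : H, Φ ⟨sharp act 1 h, LinearMap.mem_range.mpr ⟨(1 : A) ⊗ₜ[k] h, rfl⟩⟩ = π h)) ∧
    (∀ Φ : ↥(LinearMap.range ((smashMul act).flip ((1 : A) ⊗ₜ[k] (1 : H)))) →ₗ[k] B,
      ((∀ (x y : A ⊗[k] H)
          (hx : x ∈ LinearMap.range ((smashMul act).flip ((1 : A) ⊗ₜ[k] (1 : H))))
          (hy : y ∈ LinearMap.range ((smashMul act).flip ((1 : A) ⊗ₜ[k] (1 : H))))
          (hxy : smashMul act x y ∈
            LinearMap.range ((smashMul act).flip ((1 : A) ⊗ₜ[k] (1 : H)))),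
        Φ ⟨smashMul act x y, hxy⟩ = Φ ⟨x, hx⟩ * Φ ⟨y, hy⟩) ∧
      Φ ⟨sharp act 1 1, LinearMap.mem_range.mpr ⟨(1 : A) ⊗ₜ[k] (1 : H), rfl⟩⟩ = 1 ∧
      (∀ a : A, Φ ⟨sharp act a 1, LinearMap.mem_range.mpr ⟨a ⊗ₜ[k] (1 : H), rfl⟩⟩ = φ a) ∧
      (∀ h : H, Φ ⟨sharp act 1 h, LinearMap.mem_range.mpr ⟨(1 : A) ⊗ₜ[k] h, rfl⟩⟩ = π h)) →
      ∀ (a : A) (h : H),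
        Φ ⟨sharp act a h, LinearMap.mem_range.mpr ⟨a ⊗ₜ[k] h, rfl⟩⟩ = φ a * π h) := by
  have hcov : IsCovariantPair act φ π := ⟨hπ, hCP1, hCP2⟩
  refine ⟨⟨smashLift φ π ∘ₗ (partialSmash act).subtype, hcov.isSmashLift, fun Φ hΦ => ?_⟩,
    fun Φ hΦ => IsSmashLift.apply_sharp hΦ hPA1⟩
  exact partialSmash.linearMap_ext act fun a h =>
    (IsSmashLift.apply_sharp hΦ hPA1 a h).trans (hcov.smashLift_sharp a h).symm

/-- Universal property of the partial smash product.  Given a covariant pair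
`(φ, π)` with values in `B`, there is a unique algebra morphism `Φ` on the partial smash
product `A#H` (realized as the range `W` of right multiplication by `1_A ⊗ 1_H` inside
`A ⊗ H`) with `φ = Φ ∘ φ₀` and `π = Φ ∘ π₀`; explicitly `Φ(a#h) = φ(a)π(h)`. -/
theorem smash_universal_property {B : Type} [Ring B] [Algebra k B]
    (act : H →ₗ[k] Module.End k A)
    -- symmetric partial action (PA1)-(PA4)
    (hPA1 : ∀ a : A, act 1 a = a)
    (hPA2 : ∀ (h : H) (a b : A) (n : ℕ) (h1 h2 : Fin n → H),
      Coalgebra.comul (R := k) h = ∑ i, h1 i ⊗ₜ[k] h2 i →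
      act h (a * b) = ∑ i, act (h1 i) a * act (h2 i) b)
    (hPA3 : ∀ (h x : H) (a : A) (n : ℕ) (h1 h2 : Fin n → H),
      Coalgebra.comul (R := k) h = ∑ i, h1 i ⊗ₜ[k] h2 i →
      act h (act x a) = ∑ i, act (h1 i) 1 * act (h2 i * x) a)
    (hPA4 : ∀ (h x : H) (a : A) (n : ℕ) (h1 h2 : Fin n → H),
      Coalgebra.comul (R := k) h = ∑ i, h1 i ⊗ₜ[k] h2 i →
      act h (act x a) = ∑ i, act (h1 i * x) a * act (h2 i) 1)
    -- the covariant pair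
    (φ : A →ₐ[k] B) (π : H →ₗ[k] B) (hπ : IsPartialRep k π)
    -- (CP1)
    (hCP1 : ∀ (h : H) (a : A) (n : ℕ) (h1 h2 : Fin n → H),
      Coalgebra.comul (R := k) h = ∑ i, h1 i ⊗ₜ[k] h2 i →
      φ (act h a) = ∑ i, π (h1 i) * φ a * π (antipode (R := k) (h2 i)))
    -- (CP2)
    (hCP2 : ∀ (h : H) (a : A) (n : ℕ) (h1 h2 : Fin n → H),
      Coalgebra.comul (R := k) h = ∑ i, h1 i ⊗ₜ[k] h2 i →
      φ a * ∑ i, π (antipode (R := k) (h1 i)) * π (h2 i) =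
        (∑ i, π (antipode (R := k) (h1 i)) * π (h2 i)) * φ a) :
    (∃! Φ : ↥(LinearMap.range ((smashMul act).flip ((1 : A) ⊗ₜ[k] (1 : H)))) →ₗ[k] B,
      (∀ (x y : A ⊗[k] H)
          (hx : x ∈ LinearMap.range ((smashMul act).flip ((1 : A) ⊗ₜ[k] (1 : H))))
          (hy : y ∈ LinearMap.range ((smashMul act).flip ((1 : A) ⊗ₜ[k] (1 : H))))
          (hxy : smashMul act x y ∈
            LinearMap.range ((smashMul act).flip ((1 : A) ⊗ₜ[k] (1 : H)))),
        Φ ⟨smashMul act x y, hxy⟩ = Φ ⟨x, hx⟩ * Φ ⟨y, hy⟩) ∧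
      Φ ⟨sharp act 1 1, LinearMap.mem_range.mpr ⟨(1 : A) ⊗ₜ[k] (1 : H), rfl⟩⟩ = 1 ∧
      (∀ a : A, Φ ⟨sharp act a 1, LinearMap.mem_range.mpr ⟨a ⊗ₜ[k] (1 : H), rfl⟩⟩ = φ a) ∧
      (∀ h : H, Φ ⟨sharp act 1 h, LinearMap.mem_range.mpr ⟨(1 : A) ⊗ₜ[k] h, rfl⟩⟩ = π h)) ∧
    (∀ Φ : ↥(LinearMap.range ((smashMul act).flip ((1 : A) ⊗ₜ[k] (1 : H)))) →ₗ[k] B,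
      ((∀ (x y : A ⊗[k] H)
          (hx : x ∈ LinearMap.range ((smashMul act).flip ((1 : A) ⊗ₜ[k] (1 : H))))
          (hy : y ∈ LinearMap.range ((smashMul act).flip ((1 : A) ⊗ₜ[k] (1 : H))))
          (hxy : smashMul act x y ∈
            LinearMap.range ((smashMul act).flip ((1 : A) ⊗ₜ[k] (1 : H)))),
        Φ ⟨smashMul act x y, hxy⟩ = Φ ⟨x, hx⟩ * Φ ⟨y, hy⟩) ∧
      Φ ⟨sharp act 1 1, LinearMap.mem_range.mpr ⟨(1 : A) ⊗ₜ[k] (1 : H), rfl⟩⟩ = 1 ∧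
      (∀ a : A, Φ ⟨sharp act a 1, LinearMap.mem_range.mpr ⟨a ⊗ₜ[k] (1 : H), rfl⟩⟩ = φ a) ∧
      (∀ h : H, Φ ⟨sharp act 1 h, LinearMap.mem_range.mpr ⟨(1 : A) ⊗ₜ[k] h, rfl⟩⟩ = π h)) →
      ∀ (a : A) (h : H),
        Φ ⟨sharp act a h, LinearMap.mem_range.mpr ⟨a ⊗ₜ[k] h, rfl⟩⟩ = φ a * π h) :=
  smash_universal_property_general act hPA1 φ π hπ hCP1 hCP2
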